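/- arXiv:1903.09655 — 4 statements merged into one kernel-verified Lean document; each statement's English description precedes it below -/
import Mathlib

section
/- Equivalence of exact state merging of a tripartite pure state, of the corresponding maximally entangled state, and of the corresponding set of bipartite states (Proposition 3.1 of the paper). Let d_R, d_A, d_B, K, L be positive integers and let |ψ⟩ ∈ ℂ^{d_R}⊗ℂ^{d_A}⊗ℂ^{d_B} be a unit vector with Schmidt decomposition |ψ⟩ = Σ_{l=0}^{D−1} √λ_l |l⟩⊗|ψ_l⟩ across the bipartition between the first factor and the remaining two, where D is the Schmidt rank, λ_l > 0, {|l⟩} are orthonormal in ℂ^{d_R} and {|ψ_l⟩} are orthonormal in ℂ^{d_A}⊗ℂ^{d_B}. Define the corresponding maximally entangled state |Φ_D⁺(ψ)⟩ := Σ_{l=0}^{D−1} (1/√D) |l⟩⊗|ψ_l⟩. Let M be any ℂ-linear map from matrices on ℂ^{d_A}⊗ℂ^{d_B}⊗ℂ^K⊗ℂ^K to matrices on ℂ^{d_{B′}}⊗ℂ^{d_B}⊗ℂ^L⊗ℂ^L, where d_{B′} = d_A, and let |ψ_l⟩^{B′B} denote |ψ_l⟩ with the ℂ^{d_A} factor relabelled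 as ℂ^{d_{B′}}. Then the following are equivalent: (1) (id_R ⊗ M)( |ψ⟩⟨ψ| ⊗ |Φ_K⁺⟩⟨Φ_K⁺| ) = |ψ′⟩⟨ψ′| ⊗ |Φ_L⁺⟩⟨Φ_L⁺|, where |ψ′⟩ = Σ_l √λ_l |l⟩⊗|ψ_l⟩^{B′B}; (2) (id_R ⊗ M)( |Φ_D⁺(ψ)⟩⟨Φ_D⁺(ψ)| ⊗ |Φ_K⁺⟩⟨Φ_K⁺| ) = |Φ_D⁺(ψ)′⟩⟨Φ_D⁺(ψ)′| ⊗ |Φ_L⁺⟩⟨Φ_L⁺|, where |Φ_D⁺(ψ)′⟩ = Σ_l (1/√D)|l⟩⊗|ψ_l⟩^{B′B}; (3) for every density matrix ρ of the form ρ = Σ_{l,l′=0}^{D−1} α_{l,l′} |ψ_l⟩⟨ψ_{l′}| it holds that M( ρ ⊗ |Φ_K⁺⟩⟨Φ_K⁺| ) = ρ′ ⊗ |Φ_L⁺⟩⟨Φ_L⁺|, where ρ′ = Σ_{l,l′} α_{l,l′} |ψ_l⟩^{B′B}⟨ψ_{l′}|^{B′B}. -/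
open Matrix Kronecker ComplexOrder

noncomputable section

/-- `id_R ⊗ M` for a map `M` on matrices: the reference system (first factor) is untouched. -/
def idTen {dR : ℕ} {γ γ' : Type*}
    (M : Matrix γ γ ℂ → Matrix γ' γ' ℂ)
    (ρ : Matrix (Fin dR × γ) (Fin dR × γ) ℂ) :
    Matrix (Fin dR × γ') (Fin dR × γ') ℂ :=
  Matrix.of fun p q => M (Matrix.of fun x y => ρ (p.1, x) (q.1, y)) p.2 q.2

/-- The maximally entangled state `|Φ_K⁺⟩ = (1/√K) Σ_l |l⟩⊗|l⟩`. -/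
def phiP (K : ℕ) : Fin K × Fin K → ℂ :=
  fun p => if p.1 = p.2 then (((Real.sqrt K)⁻¹ : ℝ) : ℂ) else 0

/-- The outer product `|v⟩⟨v|`. -/
def outer {α : Type*} (v : α → ℂ) : Matrix α α ℂ :=
  Matrix.of fun i j => v i * star (v j)

/-!
All three conditions say that the submodule of matrices `ρ` with
`M (ρ ⊗ |Φ_K⁺⟩⟨Φ_K⁺|) = ρ ⊗ |Φ_L⁺⟩⟨Φ_L⁺|` contains every `|f_m⟩⟨f_m'|`.

For a state `S = Σ_l c_l |e_l⟩ ⊗ |f_l⟩` the `(r, r')` block of `|S⟩⟨S|` is `|S_r⟩⟨S_r'|`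
with `S_r = Σ_l c_l e_l(r) f_l`. Orthonormality of the `e_l` gives back
`c_m f_m = Σ_r conj (e_m(r)) S_r`, so when all `c_l ≠ 0` the `S_r` and the `f_m` span the
same space, and the blocks of `|S⟩⟨S|` are merged iff all `|f_m⟩⟨f_m'|` are. This covers
`ψ` and `Φ_D⁺(ψ)` alike.

For the bipartite condition, rescaling by the trace extends it from density matrices to all
positive semidefinite `ρ` in the span, in particular to every `|v⟩⟨v|` with `v` in the span
of the `f_l`, and polarization recovers `|f_m⟩⟨f_m'|` from these.
-/

theorem Matrix.PosSemidef.mem_of_forall_trace_eq_one {n : Type*} [Fintype n]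
    {W : Submodule ℂ (Matrix n n ℂ)} {ρ : Matrix n n ℂ} (hρ : ρ.PosSemidef)
    (h : ∀ t : ℂ, 0 ≤ t → (t • ρ).trace = 1 → t • ρ ∈ W) : ρ ∈ W := by
  by_cases h0 : ρ.trace = 0
  · rw [hρ.trace_eq_zero_iff.mp h0]
    exact W.zero_mem
  · have hinv := h ρ.trace⁻¹ (inv_nonneg.mpr hρ.trace_nonneg)
      (by rw [trace_smul, smul_eq_mul, inv_mul_cancel₀ h0])
    simpa [smul_smul, h0] using W.smul_mem ρ.trace hinv

namespace ExactMerging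

section Outer

variable {n ι : Type*}

lemma vecMulVec_sum_smul_star_sum_smul [Fintype ι] (a b : ι → ℂ) (u : ι → n → ℂ) :
    vecMulVec (∑ i, a i • u i) (star (∑ j, b j • u j))
      = ∑ i, ∑ j, (a i * star (b j)) • vecMulVec (u i) (star (u j)) := by
  ext x y
  simp only [vecMulVec_apply, Finset.sum_apply, Matrix.sum_apply, Matrix.smul_apply,
    Pi.smul_apply, smul_eq_mul, star_sum, Pi.star_apply, star_mul', Finset.sum_mul_sum]
  refine Finset.sum_congr rfl fun i _ => Finset.sum_congr rfl fun j _ => ?_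
  ring

lemma vecMulVec_star_mem_of_mem_span [Fintype ι] {W : Submodule ℂ (Matrix n n ℂ)}
    {u : ι → n → ℂ} (h : ∀ i j, vecMulVec (u i) (star (u j)) ∈ W) {v w : n → ℂ}
    (hv : v ∈ Submodule.span ℂ (Set.range u)) (hw : w ∈ Submodule.span ℂ (Set.range u)) :
    vecMulVec v (star w) ∈ W := by
  obtain ⟨a, rfl⟩ := (Submodule.mem_span_range_iff_exists_fun ℂ).mp hv
  obtain ⟨b, rfl⟩ := (Submodule.mem_span_range_iff_exists_fun ℂ).mp hw
  rw [vecMulVec_sum_smul_star_sum_smul]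
  exact Submodule.sum_mem _ fun i _ => Submodule.sum_mem _ fun j _ => W.smul_mem _ (h i j)

lemma outer_polarization (a b : n → ℂ) :
    outer (a + b) - outer (a - b) + Complex.I • outer (a + Complex.I • b)
      - Complex.I • outer (a - Complex.I • b) = (4 : ℂ) • vecMulVec a (star b) := by
  ext x y
  simp only [outer, vecMulVec_apply, Matrix.sub_apply, Matrix.add_apply, Matrix.smul_apply,
    of_apply, Pi.add_apply, Pi.sub_apply, Pi.smul_apply, Pi.star_apply, smul_eq_mul, star_add,
    star_sub, star_mul', Complex.star_def, Complex.conj_I]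
  linear_combination
    (2 * b x * (starRingEnd ℂ) (a y) - 2 * a x * (starRingEnd ℂ) (b y)) * Complex.I_mul_I

lemma vecMulVec_star_mem_of_forall_outer_mem {V : Submodule ℂ (n → ℂ)}
    {W : Submodule ℂ (Matrix n n ℂ)} (h : ∀ v ∈ V, outer v ∈ W) {a b : n → ℂ}
    (ha : a ∈ V) (hb : b ∈ V) : vecMulVec a (star b) ∈ W := by
  have hI : Complex.I • b ∈ V := V.smul_mem _ hb
  refine (W.smul_mem_iff (four_ne_zero' ℂ)).mp ?_
  rw [← outer_polarization]
  exact W.sub_mem (W.add_mem (W.sub_mem (h _ (V.add_mem ha hb)) (h _ (V.sub_mem ha hb)))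
    (W.smul_mem _ (h _ (V.add_mem ha hI)))) (W.smul_mem _ (h _ (V.sub_mem ha hI)))

end Outer

section CoeffState

variable {n ι : Type*} [Fintype ι]

def coeffState (f : ι → n → ℂ) (α : ι → ι → ℂ) : Matrix n n ℂ :=
  Matrix.of fun x y => ∑ l, ∑ l', α l l' * f l x * star (f l' y)

lemma coeffState_eq_sum (f : ι → n → ℂ) (α : ι → ι → ℂ) :
    coeffState f α = ∑ l, ∑ l', α l l' • vecMulVec (f l) (star (f l')) := by
  ext x y
  simp [coeffState, Matrix.sum_apply, vecMulVec_apply, mul_assoc]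

lemma smul_coeffState (t : ℂ) (f : ι → n → ℂ) (α : ι → ι → ℂ) :
    t • coeffState f α = coeffState f (t • α) := by
  simp only [coeffState_eq_sum, Finset.smul_sum, smul_smul, Pi.smul_apply, smul_eq_mul]

lemma outer_sum_smul (f : ι → n → ℂ) (c : ι → ℂ) :
    outer (∑ l, c l • f l) = coeffState f fun l l' => c l * star (c l') := by
  rw [coeffState_eq_sum, ← vecMulVec_sum_smul_star_sum_smul]
  rfl

variable [Fintype n] {W : Submodule ℂ (Matrix n n ℂ)} {f : ι → n → ℂ}

lemma outer_mem_of_forall_density_mem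
    (h : ∀ α, (coeffState f α).PosSemidef → (coeffState f α).trace = 1 →
      coeffState f α ∈ W)
    {v : n → ℂ} (hv : v ∈ Submodule.span ℂ (Set.range f)) : outer v ∈ W := by
  obtain ⟨c, rfl⟩ := (Submodule.mem_span_range_iff_exists_fun ℂ).mp hv
  have hpsd : (outer (∑ l, c l • f l)).PosSemidef := posSemidef_vecMulVec_self_star _
  refine hpsd.mem_of_forall_trace_eq_one fun t ht htr => ?_
  rw [outer_sum_smul] at hpsd htr ⊢
  rw [smul_coeffState] at htr ⊢
  exact h _ (by rw [← smul_coeffState]; exact hpsd.smul ht) htr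

theorem forall_density_mem_iff :
    (∀ α, (coeffState f α).PosSemidef → (coeffState f α).trace = 1 →
        coeffState f α ∈ W) ↔
      ∀ m m', vecMulVec (f m) (star (f m')) ∈ W := by
  refine ⟨fun h m m' => ?_, fun h α _ _ => ?_⟩
  · exact vecMulVec_star_mem_of_forall_outer_mem (fun _ => outer_mem_of_forall_density_mem h)
      (Submodule.subset_span ⟨m, rfl⟩) (Submodule.subset_span ⟨m', rfl⟩)
  · rw [coeffState_eq_sum]
    exact Submodule.sum_mem _ fun l _ => Submodule.sum_mem _ fun l' _ => W.smul_mem _ (h l l')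

end CoeffState

section Schmidt

variable {n ι R : Type*} [Fintype ι] {e : ι → R → ℂ} {f : ι → n → ℂ}

/-- `(⟨r| ⊗ 1) S` for `S = Σ_l c_l |e_l⟩ ⊗ |f_l⟩`. -/
def schmidtSlice (c : ι → ℂ) (e : ι → R → ℂ) (f : ι → n → ℂ) (r : R) : n → ℂ :=
  fun x => ∑ l, c l * e l r * f l x

lemma sum_star_mul_sum_mul_of_orthonormal [Fintype R] [DecidableEq ι]
    (he : ∀ l l', ∑ r, star (e l r) * e l' r = if l = l' then 1 else 0)
    (g : ι → ℂ) (m : ι) :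
    ∑ r, star (e m r) * ∑ l, e l r * g l = g m := by
  simp_rw [Finset.mul_sum, ← mul_assoc]
  rw [Finset.sum_comm]
  simp_rw [← Finset.sum_mul, he]
  simp

lemma schmidtSlice_mem_span (c : ι → ℂ) (r : R) :
    schmidtSlice c e f r ∈ Submodule.span ℂ (Set.range f) :=
  (Submodule.mem_span_range_iff_exists_fun ℂ).mpr
    ⟨fun l => c l * e l r, by ext x; simp [schmidtSlice, Finset.sum_apply]⟩

lemma smul_mem_span_schmidtSlice [Fintype R] [DecidableEq ι]
    (he : ∀ l l', ∑ r, star (e l r) * e l' r = if l = l' then 1 else 0)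
    (c : ι → ℂ) (m : ι) :
    c m • f m ∈ Submodule.span ℂ (Set.range (schmidtSlice c e f)) := by
  refine (Submodule.mem_span_range_iff_exists_fun ℂ).mpr ⟨fun r => star (e m r), ?_⟩
  ext x
  simpa [schmidtSlice, Finset.sum_apply, mul_comm, mul_left_comm] using
    sum_star_mul_sum_mul_of_orthonormal he (fun l => c l * f l x) m

theorem forall_vecMulVec_schmidtSlice_mem_iff [Fintype R] [DecidableEq ι]
    (he : ∀ l l', ∑ r, star (e l r) * e l' r = if l = l' then 1 else 0)
    {c : ι → ℂ} (hc : ∀ l, c l ≠ 0) (W : Submodule ℂ (Matrix n n ℂ)) :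
    (∀ r r', vecMulVec (schmidtSlice c e f r) (star (schmidtSlice c e f r')) ∈ W) ↔
      ∀ m m', vecMulVec (f m) (star (f m')) ∈ W := by
  refine ⟨fun h m m' => ?_, fun h r r' => ?_⟩
  · have hmem := vecMulVec_star_mem_of_mem_span h
      (smul_mem_span_schmidtSlice he c m) (smul_mem_span_schmidtSlice he c m')
    rw [star_smul, smul_vecMulVec, vecMulVec_smul, smul_smul] at hmem
    exact (W.smul_mem_iff (mul_ne_zero (hc m) (star_ne_zero.mpr (hc m')))).mp hmem
  · exact vecMulVec_star_mem_of_mem_span h (schmidtSlice_mem_span c r) (schmidtSlice_mem_span c r')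

end Schmidt

section Merging

variable {γ κ κ' : Type*}

def mergedInputs
    (M : Matrix (γ × κ) (γ × κ) ℂ →ₗ[ℂ] Matrix (γ × κ') (γ × κ') ℂ)
    (φ : κ → ℂ) (φ' : κ' → ℂ) : Submodule ℂ (Matrix γ γ ℂ) :=
  LinearMap.eqLocus (M ∘ₗ (kroneckerBilinear (R := ℂ)).flip (outer φ))
    ((kroneckerBilinear (R := ℂ)).flip (outer φ'))

lemma mem_mergedInputs
    {M : Matrix (γ × κ) (γ × κ) ℂ →ₗ[ℂ] Matrix (γ × κ') (γ × κ') ℂ}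
    {φ : κ → ℂ} {φ' : κ' → ℂ} {ρ : Matrix γ γ ℂ} :
    ρ ∈ mergedInputs M φ φ' ↔ M (ρ ⊗ₖ outer φ) = ρ ⊗ₖ outer φ' :=
  Iff.rfl

lemma idTen_outer_kronecker_eq_iff {dR : ℕ}
    (M : Matrix (γ × κ) (γ × κ) ℂ →ₗ[ℂ] Matrix (γ × κ') (γ × κ') ℂ)
    (S : Fin dR → γ → ℂ) (φ : κ → ℂ) (φ' : κ' → ℂ) :
    idTen M (Matrix.of fun p q =>
          S p.1 p.2.1 * star (S q.1 q.2.1) * (φ p.2.2 * star (φ q.2.2)))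
        = (Matrix.of fun p q =>
          S p.1 p.2.1 * star (S q.1 q.2.1) * (φ' p.2.2 * star (φ' q.2.2)))
      ↔ ∀ r r', vecMulVec (S r) (star (S r')) ∈ mergedInputs M φ φ' := by
  simp only [mem_mergedInputs]
  constructor
  · intro h r r'
    ext x y
    exact congrFun (congrFun h (r, x)) (r', y)
  · intro h
    ext ⟨r, x⟩ ⟨r', y⟩
    exact congrFun (congrFun (h r r') x) y

end Merging

end ExactMerging

open ExactMerging

theorem exact_merging_equivalent_tasks_general
    (dR dA dB K L D : ℕ)
    (lam : Fin D → ℝ) (hlam : ∀ l, 0 < lam l)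
    (e : Fin D → Fin dR → ℂ)
    (he : ∀ l l', ∑ r, star (e l r) * e l' r = if l = l' then 1 else 0)
    (f : Fin D → Fin dA × Fin dB → ℂ)
    (ψ : Fin dR × (Fin dA × Fin dB) → ℂ)
    (hψ : ψ = fun p => ∑ l, (Real.sqrt (lam l) : ℂ) * e l p.1 * f l p.2)
    (M : Matrix ((Fin dA × Fin dB) × (Fin K × Fin K))
               ((Fin dA × Fin dB) × (Fin K × Fin K)) ℂ →ₗ[ℂ]
         Matrix ((Fin dA × Fin dB) × (Fin L × Fin L))
               ((Fin dA × Fin dB) × (Fin L × Fin L)) ℂ) :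
    ((idTen (⇑M) (Matrix.of fun p q =>
          ψ (p.1, p.2.1) * star (ψ (q.1, q.2.1)) *
            (phiP K p.2.2 * star (phiP K q.2.2)))
        = Matrix.of fun p q =>
            ψ (p.1, p.2.1) * star (ψ (q.1, q.2.1)) *
              (phiP L p.2.2 * star (phiP L q.2.2)))
      ↔ (idTen (⇑M) (Matrix.of fun p q =>
            (∑ l, (((Real.sqrt D)⁻¹ : ℝ) : ℂ) * e l p.1 * f l p.2.1) *
              star (∑ l, (((Real.sqrt D)⁻¹ : ℝ) : ℂ) * e l q.1 * f l q.2.1) *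
                (phiP K p.2.2 * star (phiP K q.2.2)))
          = Matrix.of fun p q =>
              (∑ l, (((Real.sqrt D)⁻¹ : ℝ) : ℂ) * e l p.1 * f l p.2.1) *
                star (∑ l, (((Real.sqrt D)⁻¹ : ℝ) : ℂ) * e l q.1 * f l q.2.1) *
                  (phiP L p.2.2 * star (phiP L q.2.2)))) ∧
    ((idTen (⇑M) (Matrix.of fun p q =>
          ψ (p.1, p.2.1) * star (ψ (q.1, q.2.1)) *
            (phiP K p.2.2 * star (phiP K q.2.2)))
        = Matrix.of fun p q =>
            ψ (p.1, p.2.1) * star (ψ (q.1, q.2.1)) *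
              (phiP L p.2.2 * star (phiP L q.2.2)))
      ↔ (∀ α : Fin D → Fin D → ℂ,
          (Matrix.of fun x y : Fin dA × Fin dB =>
              ∑ l, ∑ l', α l l' * f l x * star (f l' y)).PosSemidef →
          (Matrix.of fun x y : Fin dA × Fin dB =>
              ∑ l, ∑ l', α l l' * f l x * star (f l' y)).trace = 1 →
          M ((Matrix.of fun x y : Fin dA × Fin dB =>
                ∑ l, ∑ l', α l l' * f l x * star (f l' y)) ⊗ₖ outer (phiP K))
            = (Matrix.of fun x y : Fin dA × Fin dB =>
                ∑ l, ∑ l', α l l' * f l x * star (f l' y)) ⊗ₖ outer (phiP L))) := by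
  subst hψ
  have merge_iff (c : Fin D → ℂ) (hc : ∀ l, c l ≠ 0) :=
    (idTen_outer_kronecker_eq_iff M (schmidtSlice c e f) (phiP K) (phiP L)).trans
      (forall_vecMulVec_schmidtSlice_mem_iff he hc _)
  have hsqrt : ∀ l, ((Real.sqrt (lam l) : ℝ) : ℂ) ≠ 0 := fun l =>
    Complex.ofReal_ne_zero.mpr (Real.sqrt_ne_zero'.mpr (hlam l))
  have hinv : ∀ l : Fin D, (((Real.sqrt D)⁻¹ : ℝ) : ℂ) ≠ 0 := fun l =>
    Complex.ofReal_ne_zero.mpr (inv_ne_zero (Real.sqrt_ne_zero'.mpr (Nat.cast_pos.mpr l.pos)))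
  exact ⟨(merge_iff _ hsqrt).trans (merge_iff _ hinv).symm,
    (merge_iff _ hsqrt).trans forall_density_mem_iff.symm⟩

/-- **Equivalence of exact state merging of a tripartite pure state, of the corresponding
maximally entangled state, and of the corresponding set of bipartite states**
(Proposition 3.1).  Given the Schmidt decomposition `|ψ⟩ = Σ_l √λ_l |l⟩⊗|ψ_l⟩` and any
ℂ-linear map `M` on matrices, merging `ψ`, merging the corresponding maximally entangled
state `Φ_D⁺(ψ)`, and merging every bipartite state supported on the span of the `|ψ_l⟩` are
all equivalent. -/
theorem exact_merging_equivalent_tasks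
    (dR dA dB K L D : ℕ)
    (lam : Fin D → ℝ) (hlam : ∀ l, 0 < lam l)
    (e : Fin D → Fin dR → ℂ)
    (he : ∀ l l', ∑ r, star (e l r) * e l' r = if l = l' then 1 else 0)
    (f : Fin D → Fin dA × Fin dB → ℂ)
    (hf : ∀ l l', ∑ x, star (f l x) * f l' x = if l = l' then 1 else 0)
    (ψ : Fin dR × (Fin dA × Fin dB) → ℂ)
    (hψ : ψ = fun p => ∑ l, (Real.sqrt (lam l) : ℂ) * e l p.1 * f l p.2)
    (M : Matrix ((Fin dA × Fin dB) × (Fin K × Fin K))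
               ((Fin dA × Fin dB) × (Fin K × Fin K)) ℂ →ₗ[ℂ]
         Matrix ((Fin dA × Fin dB) × (Fin L × Fin L))
               ((Fin dA × Fin dB) × (Fin L × Fin L)) ℂ) :
    ((idTen (⇑M) (Matrix.of fun p q =>
          ψ (p.1, p.2.1) * star (ψ (q.1, q.2.1)) *
            (phiP K p.2.2 * star (phiP K q.2.2)))
        = Matrix.of fun p q =>
            ψ (p.1, p.2.1) * star (ψ (q.1, q.2.1)) *
              (phiP L p.2.2 * star (phiP L q.2.2)))
      ↔ (idTen (⇑M) (Matrix.of fun p q =>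
            (∑ l, (((Real.sqrt D)⁻¹ : ℝ) : ℂ) * e l p.1 * f l p.2.1) *
              star (∑ l, (((Real.sqrt D)⁻¹ : ℝ) : ℂ) * e l q.1 * f l q.2.1) *
                (phiP K p.2.2 * star (phiP K q.2.2)))
          = Matrix.of fun p q =>
              (∑ l, (((Real.sqrt D)⁻¹ : ℝ) : ℂ) * e l p.1 * f l p.2.1) *
                star (∑ l, (((Real.sqrt D)⁻¹ : ℝ) : ℂ) * e l q.1 * f l q.2.1) *
                  (phiP L p.2.2 * star (phiP L q.2.2)))) ∧
    ((idTen (⇑M) (Matrix.of fun p q =>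
          ψ (p.1, p.2.1) * star (ψ (q.1, q.2.1)) *
            (phiP K p.2.2 * star (phiP K q.2.2)))
        = Matrix.of fun p q =>
            ψ (p.1, p.2.1) * star (ψ (q.1, q.2.1)) *
              (phiP L p.2.2 * star (phiP L q.2.2)))
      ↔ (∀ α : Fin D → Fin D → ℂ,
          (Matrix.of fun x y : Fin dA × Fin dB =>
              ∑ l, ∑ l', α l l' * f l x * star (f l' y)).PosSemidef →
          (Matrix.of fun x y : Fin dA × Fin dB =>
              ∑ l, ∑ l', α l l' * f l x * star (f l' y)).trace = 1 →
          M ((Matrix.of fun x y : Fin dA × Fin dB =>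
                ∑ l, ∑ l', α l l' * f l x * star (f l' y)) ⊗ₖ outer (phiP K))
            = (Matrix.of fun x y : Fin dA × Fin dB =>
                ∑ l, ∑ l', α l l' * f l x * star (f l' y)) ⊗ₖ outer (phiP L))) :=
  exact_merging_equivalent_tasks_general dR dA dB K L D lam hlam e he f ψ hψ M

end
end

section
/- Converse bound of entanglement cost in exact state merging via majorization (Corollary 3.1 of the paper). Let D, d_A, d_B, K, L be positive integers and let |ψ⟩ ∈ ℂ^D⊗ℂ^{d_A}⊗ℂ^{d_B} be a unit vector whose reduced density matrix on the first factor satisfies ψ^R = 1_D/D. Let λ_0^B denote the largest eigenvalue of ψ^B, the reduced density matrix on the third factor, and let ψ^{AB} denote the reduced density matrix on the last two factors. If the Hermitian operator (1_K/K) ⊗ ψ^B is majorized by the Hermitian operator (1_L/L) ⊗ ψ^{AB}, then K/L ≥ λ_0^B · D, i.e., log₂ K − log₂ L ≥ log₂( λ_0^B D ). Moreover, in the non-catalytic case L = 1: if (1_K/K) ⊗ ψ^B is majorized by ψ^{AB}, then K ≥ ⌈ λ_0^B D ⌉, i.e., log₂ K ≥ log₂ ⌈ λ_0^B D ⌉,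 where ⌈·⌉ is the ceiling function. -/
open Matrix Kronecker

noncomputable section

/-- The sum of the `k` largest entries of a finite family of reals, padded with zeros:
the maximum of `∑_{i∈s} lam i` over subsets `s` with at most `k` elements. -/
def topSum {n : Type*} [Fintype n] [DecidableEq n] (lam : n → ℝ) (k : ℕ) : ℝ :=
  Finset.sup' (Finset.univ.powerset.filter fun s => s.card ≤ k)
    ⟨∅, by simp⟩ fun s => ∑ i ∈ s, lam i

/-- `A` is majorized by `B` (Hermitian matrices, possibly of different sizes, eigenvalue
lists padded with zeros): every partial sum of the decreasingly ordered eigenvalues of `A`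
is at most the corresponding one of `B`, with equal total sums. -/
def MajorizedBy {m n : Type*} [Fintype m] [DecidableEq m] [Fintype n] [DecidableEq n]
    (A : Matrix m m ℂ) (B : Matrix n n ℂ) : Prop :=
  ∃ (hA : A.IsHermitian) (hB : B.IsHermitian),
    (∀ k, topSum hA.eigenvalues k ≤ topSum hB.eigenvalues k) ∧
    (∑ i, hA.eigenvalues i = ∑ j, hB.eigenvalues j)

/-- The reduced density matrix of a tripartite pure state on the last two factors. -/
def redAB {d1 d2 d3 : ℕ} (v : Fin d1 × Fin d2 × Fin d3 → ℂ) :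
    Matrix (Fin d2 × Fin d3) (Fin d2 × Fin d3) ℂ :=
  Matrix.of fun x y => ∑ r, v (r, x.1, x.2) * star (v (r, y.1, y.2))

/-- The reduced density matrix of a tripartite pure state on the last factor. -/
def redB {d1 d2 d3 : ℕ} (v : Fin d1 × Fin d2 × Fin d3 → ℂ) :
    Matrix (Fin d3) (Fin d3) ℂ :=
  Matrix.of fun b b' => ∑ r, ∑ a, v (r, a, b) * star (v (r, a, b'))

/-!
Majorization at `k = 1` compares largest eigenvalues. The largest eigenvalue of
`(1_K/K) ⊗ ψ^B` is `λ₀/K`. Writing `M` for the `(AB) × R` coefficient matrix of `ψ`, we have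
`ψ^{AB} = M Mᴴ` while `Mᴴ M` is the transpose of `ψ^R = 1/D`; hence every eigenvalue of `ψ^{AB}`
is `0` or `1/D`, and every eigenvalue of `(1_L/L) ⊗ ψ^{AB}` is at most `1/(LD)`. So
`λ₀/K ≤ 1/(LD)`. The logarithmic forms need `λ₀ > 0`, which holds because `tr ψ^B = 1`.
-/

def HasRealEigenvalue {n : Type*} [Fintype n] (A : Matrix n n ℂ) (x : ℝ) : Prop :=
  ∃ v : n → ℂ, v ≠ 0 ∧ A *ᵥ v = (x : ℂ) • v

namespace Matrix.IsHermitian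

variable {n : Type*} [Fintype n] [DecidableEq n] {A : Matrix n n ℂ}

lemma hasRealEigenvalue_eigenvalues (hA : A.IsHermitian) (i : n) :
    HasRealEigenvalue A (hA.eigenvalues i) :=
  ⟨_, (WithLp.ofLp_eq_zero 2).ne.2 <| hA.eigenvectorBasis.orthonormal.ne_zero i,
    hA.mulVec_eigenvectorBasis i⟩

lemma exists_eigenvalues_eq (hA : A.IsHermitian) {x : ℝ} (hx : HasRealEigenvalue A x) :
    ∃ i, hA.eigenvalues i = x := by
  obtain ⟨v, hv, hAv⟩ := hx
  have hmem : (x : ℂ) ∈ spectrum ℂ A := by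
    rw [← Matrix.spectrum_toLin']
    exact Module.End.HasEigenvalue.mem_spectrum <| Module.End.hasEigenvalue_of_hasEigenvector
      ⟨Module.End.mem_eigenspace_iff.mpr (by simpa using hAv), hv⟩
  obtain ⟨_, ⟨i, rfl⟩, hi⟩ := hA.spectrum_eq_image_range ▸ hmem
  exact ⟨i, Complex.ofReal_injective hi⟩

lemma eigenvalues_le (hA : A.IsHermitian) {c : ℝ} (hc : ∀ x, HasRealEigenvalue A x → x ≤ c)
    (i : n) : hA.eigenvalues i ≤ c :=
  hc _ (hA.hasRealEigenvalue_eigenvalues i)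

lemma re_trace_le (hA : A.IsHermitian) {c : ℝ} (hc : ∀ x, HasRealEigenvalue A x → x ≤ c) :
    A.trace.re ≤ Fintype.card n * c := by
  rw [hA.trace_eq_sum_eigenvalues]
  simpa using Finset.sum_le_sum fun i (_ : i ∈ Finset.univ) => hA.eigenvalues_le hc i

end Matrix.IsHermitian

section topSum

variable {n : Type*} [Fintype n] [DecidableEq n] {lam : n → ℝ}

lemma le_topSum_one (i : n) : lam i ≤ topSum lam 1 :=
  Finset.le_sup'_of_le _ (b := {i}) (by simp) (by simp)

lemma topSum_one_le {c : ℝ} (hc : 0 ≤ c) (h : ∀ i, lam i ≤ c) : topSum lam 1 ≤ c := by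
  refine Finset.sup'_le _ _ fun s hs => ?_
  obtain rfl | hne := s.eq_empty_or_nonempty
  · simpa using hc
  · obtain ⟨i, rfl⟩ :=
      Finset.card_eq_one.mp ((Finset.mem_filter.mp hs).2.antisymm hne.card_pos)
    simpa using h i

lemma MajorizedBy.le_of_hasRealEigenvalue {m : Type*} [Fintype m] [DecidableEq m]
    {A : Matrix m m ℂ} {B : Matrix n n ℂ} (hAB : MajorizedBy A B) {c : ℝ} (hc : 0 ≤ c)
    (hB : ∀ y, HasRealEigenvalue B y → y ≤ c) {x : ℝ} (hx : HasRealEigenvalue A x) : x ≤ c := by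
  obtain ⟨hA, hB', hle, -⟩ := hAB
  obtain ⟨i, rfl⟩ := hA.exists_eigenvalues_eq hx
  exact (le_topSum_one i).trans <| (hle 1).trans <| topSum_one_le hc (hB'.eigenvalues_le hB)

end topSum

lemma hasRealEigenvalue_natCast_inv_smul_iff {n : Type*} [Fintype n] {A : Matrix n n ℂ}
    {N : ℕ} (hN : N ≠ 0) {x : ℝ} :
    HasRealEigenvalue ((N : ℂ)⁻¹ • A) (x / N) ↔ HasRealEigenvalue A x := by
  have hN' : (N : ℂ) ≠ 0 := Nat.cast_ne_zero.mpr hN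
  refine exists_congr fun v => and_congr_right fun _ => ?_
  rw [smul_mulVec, Complex.ofReal_div, Complex.ofReal_natCast, div_eq_inv_mul, ← smul_smul]
  exact (smul_right_injective _ (inv_ne_zero hN')).eq_iff

section Kronecker

variable {ι m : Type*} [Fintype ι] [DecidableEq ι] [Fintype m]

lemma one_kronecker_mulVec_apply (C : Matrix m m ℂ) (w : ι × m → ℂ) (i : ι) (y : m) :
    (((1 : Matrix ι ι ℂ) ⊗ₖ C) *ᵥ w) (i, y) = (C *ᵥ fun y' => w (i, y')) y := by
  simp [mulVec, dotProduct, Fintype.sum_prod_type, one_apply, ite_mul]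

lemma hasRealEigenvalue_one_kronecker_iff [Nonempty ι] {C : Matrix m m ℂ} {x : ℝ} :
    HasRealEigenvalue ((1 : Matrix ι ι ℂ) ⊗ₖ C) x ↔ HasRealEigenvalue C x := by
  constructor
  · rintro ⟨w, hw, hCw⟩
    obtain ⟨⟨i, y⟩, hiy⟩ := Function.ne_iff.mp hw
    refine ⟨fun y' => w (i, y'), Function.ne_iff.mpr ⟨y, hiy⟩, funext fun y' => ?_⟩
    simpa [one_kronecker_mulVec_apply] using congrFun hCw (i, y')
  · rintro ⟨v, hv, hCv⟩
    classical
    obtain ⟨i⟩ := ‹Nonempty ι›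
    refine ⟨fun p => if p.1 = i then v p.2 else 0, fun h => hv (funext fun y => ?_), ?_⟩
    · simpa using congrFun h (i, y)
    · ext ⟨j, y⟩
      rw [one_kronecker_mulVec_apply]
      by_cases hj : j = i <;> simp [hj, hCv, ← Pi.zero_def]

end Kronecker

lemma eq_zero_or_eq_of_hasRealEigenvalue_mul_conjTranspose {m n : Type*} [Fintype m]
    [Fintype n] [DecidableEq n] {M : Matrix m n ℂ} {c : ℝ} (hM : Mᴴ * M = (c : ℂ) • 1) {x : ℝ}
    (hx : HasRealEigenvalue (M * Mᴴ) x) : x = 0 ∨ x = c := by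
  obtain ⟨u, hu, hMu⟩ := hx
  by_cases h0 : Mᴴ *ᵥ u = 0
  · have hxu : (x : ℂ) • u = 0 := by rw [← hMu, ← mulVec_mulVec, h0, mulVec_zero]
    exact .inl (Complex.ofReal_eq_zero.mp ((smul_eq_zero.mp hxu).resolve_right hu))
  · have hc : (c : ℂ) • (Mᴴ *ᵥ u) = (x : ℂ) • (Mᴴ *ᵥ u) :=
      calc (c : ℂ) • (Mᴴ *ᵥ u) = (Mᴴ * M) *ᵥ (Mᴴ *ᵥ u) := by rw [hM, smul_mulVec, one_mulVec]
        _ = Mᴴ *ᵥ ((M * Mᴴ) *ᵥ u) := by rw [mulVec_mulVec, mulVec_mulVec, Matrix.mul_assoc]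
        _ = (x : ℂ) • (Mᴴ *ᵥ u) := by rw [hMu, mulVec_smul]
    exact .inr (Complex.ofReal_injective (smul_left_injective ℂ h0 hc)).symm

section State

variable {D dA dB : ℕ} (ψ : Fin D × Fin dA × Fin dB → ℂ)

def coeffMatrix : Matrix (Fin dA × Fin dB) (Fin D) ℂ :=
  Matrix.of fun x r => ψ (r, x.1, x.2)

lemma redAB_eq_coeffMatrix_mul_conjTranspose :
    redAB ψ = coeffMatrix ψ * (coeffMatrix ψ)ᴴ := by
  ext x y
  simp [redAB, coeffMatrix, mul_apply]

lemma conjTranspose_coeffMatrix_mul_coeffMatrix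
    (hR : (Matrix.of fun r r' : Fin D => ∑ a, ∑ b, ψ (r, a, b) * star (ψ (r', a, b)))
        = ((D : ℂ))⁻¹ • 1) :
    (coeffMatrix ψ)ᴴ * coeffMatrix ψ = (((D : ℝ)⁻¹ : ℝ) : ℂ) • 1 := by
  ext r r'
  have h := congrFun (congrFun hR r') r
  simp only [of_apply] at h
  simp only [coeffMatrix, mul_apply, conjTranspose_apply, of_apply, Fintype.sum_prod_type,
    mul_comm (star _), h]
  simp [one_apply, eq_comm]

lemma le_of_hasRealEigenvalue_redAB
    (hR : (Matrix.of fun r r' : Fin D => ∑ a, ∑ b, ψ (r, a, b) * star (ψ (r', a, b)))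
        = ((D : ℂ))⁻¹ • 1)
    {x : ℝ} (hx : HasRealEigenvalue (redAB ψ) x) : x ≤ (D : ℝ)⁻¹ := by
  rw [redAB_eq_coeffMatrix_mul_conjTranspose] at hx
  obtain rfl | rfl := eq_zero_or_eq_of_hasRealEigenvalue_mul_conjTranspose
    (conjTranspose_coeffMatrix_mul_coeffMatrix ψ hR) hx
  · positivity
  · exact le_rfl

lemma redB_isHermitian : (redB ψ).IsHermitian := by
  ext b b'
  simp [redB, star_sum, mul_comm]

lemma trace_redB (hnorm : ∑ x, Complex.normSq (ψ x) = 1) : (redB ψ).trace = 1 :=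
  calc (redB ψ).trace = ∑ b, ∑ r, ∑ a, ψ (r, a, b) * star (ψ (r, a, b)) := rfl
    _ = ∑ r, ∑ a, ∑ b, ψ (r, a, b) * star (ψ (r, a, b)) := by
      rw [Finset.sum_comm]; exact Finset.sum_congr rfl fun r _ => Finset.sum_comm
    _ = ((∑ x, Complex.normSq (ψ x) : ℝ) : ℂ) := by
      simp [Fintype.sum_prod_type, Complex.mul_conj]
    _ = 1 := by rw [hnorm, Complex.ofReal_one]

end State

/-- **Converse bound of entanglement cost in exact state merging via majorization**
(Corollary 3.1).  For a tripartite pure state `ψ` with `ψ^R = 1/D`: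
if `(1_K/K) ⊗ ψ^B ≺ (1_L/L) ⊗ ψ^{AB}` then `K/L ≥ λ₀^B·D`
(equivalently `log₂K − log₂L ≥ log₂(λ₀^B D)`); and in the non-catalytic case,
if `(1_K/K) ⊗ ψ^B ≺ ψ^{AB}` then `K ≥ ⌈λ₀^B D⌉`. -/
theorem exact_merging_majorization_converse
    (D dA dB K L : ℕ) (hD : 0 < D) (hK : 0 < K) (hL : 0 < L)
    (ψ : Fin D × Fin dA × Fin dB → ℂ)
    (hnorm : ∑ x, Complex.normSq (ψ x) = 1)
    (hR : (Matrix.of fun r r' : Fin D => ∑ a, ∑ b, ψ (r, a, b) * star (ψ (r', a, b)))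
        = ((D : ℂ))⁻¹ • 1)
    (lam0 : ℝ)
    (hlam : IsGreatest {x : ℝ | ∃ v : Fin dB → ℂ, v ≠ 0 ∧
        (redB ψ).mulVec v = (x : ℂ) • v} lam0) :
    (MajorizedBy (((K : ℂ))⁻¹ • ((1 : Matrix (Fin K) (Fin K) ℂ) ⊗ₖ redB ψ))
        (((L : ℂ))⁻¹ • ((1 : Matrix (Fin L) (Fin L) ℂ) ⊗ₖ redAB ψ)) →
      lam0 * D ≤ (K : ℝ) / (L : ℝ) ∧
      Real.logb 2 (lam0 * D) ≤ Real.logb 2 K - Real.logb 2 L) ∧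
    (MajorizedBy (((K : ℂ))⁻¹ • ((1 : Matrix (Fin K) (Fin K) ℂ) ⊗ₖ redB ψ))
        (redAB ψ) →
      Nat.ceil (lam0 * D) ≤ K ∧
      Real.logb 2 (Nat.ceil (lam0 * D) : ℝ) ≤ Real.logb 2 K) := by
  have hK' : (0 : ℝ) < K := Nat.cast_pos.mpr hK
  have hL' : (0 : ℝ) < L := Nat.cast_pos.mpr hL
  have hD' : (0 : ℝ) < D := Nat.cast_pos.mpr hD
  have hlam_pos : 0 < lam0 := by
    have h := (redB_isHermitian ψ).re_trace_le fun x hx => hlam.2 hx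
    rw [trace_redB ψ hnorm, Complex.one_re] at h
    exact pos_of_mul_pos_right (one_pos.trans_le h) (Nat.cast_nonneg _)
  have := Fin.pos_iff_nonempty.mp hK
  have hA :
      HasRealEigenvalue ((K : ℂ)⁻¹ • ((1 : Matrix (Fin K) (Fin K) ℂ) ⊗ₖ redB ψ)) (lam0 / K) :=
    (hasRealEigenvalue_natCast_inv_smul_iff hK.ne').mpr
      (hasRealEigenvalue_one_kronecker_iff.mpr hlam.1)
  refine ⟨fun hmaj => ?_, fun hmaj => ?_⟩
  · have := Fin.pos_iff_nonempty.mp hL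
    have hB (y : ℝ)
        (hy : HasRealEigenvalue ((L : ℂ)⁻¹ • ((1 : Matrix (Fin L) (Fin L) ℂ) ⊗ₖ redAB ψ)) y) :
        y ≤ (D : ℝ)⁻¹ / L := by
      rw [← mul_div_cancel_left₀ y hL'.ne', hasRealEigenvalue_natCast_inv_smul_iff hL.ne',
        hasRealEigenvalue_one_kronecker_iff] at hy
      exact (le_div_iff₀' hL').mpr (le_of_hasRealEigenvalue_redAB ψ hR hy)
    have h := hmaj.le_of_hasRealEigenvalue (by positivity) hB hA
    have hKL : lam0 * D ≤ K / L := by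
      rw [le_div_iff₀ hL']
      field_simp at h
      linarith
    refine ⟨hKL, ?_⟩
    rw [← Real.logb_div hK'.ne' hL'.ne']
    exact Real.logb_le_logb_of_le one_lt_two (mul_pos hlam_pos hD') hKL
  · have h := hmaj.le_of_hasRealEigenvalue (by positivity)
      (fun y => le_of_hasRealEigenvalue_redAB ψ hR) hA
    have hceil : Nat.ceil (lam0 * D) ≤ K := by
      rw [Nat.ceil_le]
      field_simp at h
      linarith
    refine ⟨hceil, ?_⟩
    exact Real.logb_le_logb_of_le one_lt_two
      (Nat.cast_pos.mpr (Nat.ceil_pos.mpr (mul_pos hlam_pos hD'))) (by exact_mod_cast hceil)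

end
end

section
/- Requirement on local system sizes for resource states consisting of bipartite entanglement to prepare a maximal-Schmidt-rank multipartite state (Theorem 9.3 of the paper, combinatorial core). Let m be a positive integer, let D ≥ 1 be a real number, let V be the vertex set of the complete graph on 2m vertices, and assign to each unordered pair (edge) e a real number M_e ≥ 1. Suppose that for every subset S ⊆ V with |S| = m, the product of M_e over all edges e with exactly one endpoint in S is at least D^m (this is the Schmidt-rank condition across every balanced bipartition). Then max_{v∈V} ∏_{e ∋ v} M_e ≥ D^{2 − 1/m}, where the product is over all edges incident to v. In particular, if each party v must locally store its halves of bipartite maximally entangled states of Schmidt ranks M_e for every incident edge e, at least one party needs local dimension at least D^{2−1/m}. -/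
open Finset

lemma my_binom_id (m : ℕ) (hm : 0 < m) :
    m * Nat.choose (2*m) m = 2*(2*m-1) * Nat.choose (2*m-2) (m-1) := by
  obtain ⟨n, rfl⟩ := Nat.exists_eq_add_of_lt hm
  simp only [Nat.zero_add] at *
  have h := Nat.succ_mul_centralBinom_succ n
  unfold Nat.centralBinom at h
  have h1 : 2 * (n+1) - 1 = 2*n+1 := by omega
  have h2 : 2 * (n+1) - 2 = 2*n := by omega
  have h3 : (n+1) - 1 = n := by omega
  rw [h1, h2, h3]
  convert h using 2

lemma my_cut_eq {α : Type*} [Fintype α] [DecidableEq α] (M : α → α → ℝ) (S : Finset α) :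
    ∏ v ∈ S, ∏ w ∈ Sᶜ, M v w
      = ∏ v : α, ∏ w : α, (if v ∈ S ∧ w ∉ S then M v w else 1) := by
  have h1 : ∀ v : α, (∏ w : α, (if v ∈ S ∧ w ∉ S then M v w else 1))
      = if v ∈ S then ∏ w ∈ Sᶜ, M v w else 1 := by
    intro v
    by_cases hv : v ∈ S
    · simp only [hv, true_and, if_true]
      rw [← Finset.prod_filter]
      congr 1
      ext w; simp
    · simp [hv]
  rw [Finset.prod_congr rfl fun v _ => h1 v, ← Finset.prod_filter]
  congr 1
  ext v; simp

lemma my_count (m : ℕ) (v w : Fin (2*m)) (hvw : v ≠ w) :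
    ((Finset.powersetCard m (Finset.univ : Finset (Fin (2*m)))).filter
      (fun S => v ∈ S ∧ w ∉ S)).card = Nat.choose (2*m-2) (m-1) := by
  have hcard : (({v, w} : Finset (Fin (2*m)))ᶜ).card = 2*m - 2 := by
    rw [Finset.card_compl, Finset.card_insert_of_notMem (by simp [hvw]),
      Finset.card_singleton]
    simp
  rw [← hcard, ← Finset.card_powersetCard]
  refine Finset.card_bij' (fun S _ => S.erase v) (fun T _ => insert v T) ?hi ?hj ?left ?right
  case hi =>
    intro S hS
    simp only [Finset.mem_filter, Finset.mem_powersetCard_univ] at hS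
    obtain ⟨hSc, hv, hw⟩ := hS
    rw [Finset.mem_powersetCard]
    constructor
    · intro x hx
      simp only [Finset.mem_erase] at hx
      simp only [Finset.mem_compl, Finset.mem_insert, Finset.mem_singleton]
      rintro (rfl | rfl)
      · exact hx.1 rfl
      · exact hw hx.2
    · rw [Finset.card_erase_of_mem hv, hSc]
  case hj =>
    intro T hT
    rw [Finset.mem_powersetCard] at hT
    obtain ⟨hTsub, hTc⟩ := hT
    have hvT : v ∉ T := fun h => by
      have := hTsub h; simp at this
    have hwT : w ∉ T := fun h => by
      have := hTsub h; simp at this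
    simp only [Finset.mem_filter, Finset.mem_powersetCard_univ]
    refine ⟨?_, Finset.mem_insert_self v T, ?_⟩
    · rw [Finset.card_insert_of_notMem hvT, hTc]
      omega
    · simp only [Finset.mem_insert]
      rintro (rfl | h)
      · exact hvw rfl
      · exact hwT h
  case left =>
    intro S hS
    simp only [Finset.mem_filter] at hS
    exact Finset.insert_erase hS.2.1
  case right =>
    intro T hT
    rw [Finset.mem_powersetCard] at hT
    have hvT : v ∉ T := fun h => by
      have := hT.1 h; simp at this
    exact Finset.erase_insert hvT


/-- **Requirement on local system sizes for resource states consisting of bipartite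
entanglement to prepare a maximal-Schmidt-rank multipartite state** (combinatorial core of
Theorem 9.3).  The complete graph on `2m` vertices carries symmetric edge weights
`M v w ≥ 1`; if every balanced cut has weight-product at least `D^m`, then some vertex has
incident weight-product at least `D^(2 - 1/m)`. -/
theorem system_size_bound_for_bipartite_resources
    (m : ℕ) (hm : 0 < m) (D : ℝ) (hD : 1 ≤ D)
    (M : Fin (2 * m) → Fin (2 * m) → ℝ)
    (hsymm : ∀ v w, M v w = M w v)
    (hone : ∀ v w, v ≠ w → 1 ≤ M v w)
    (hcut : ∀ S : Finset (Fin (2 * m)), S.card = m →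
      D ^ m ≤ ∏ v ∈ S, ∏ w ∈ Sᶜ, M v w) :
    ∃ v : Fin (2 * m),
      D ^ ((2 : ℝ) - 1 / (m : ℝ)) ≤ ∏ w ∈ Finset.univ.erase v, M v w := by
  classical
  have hD0 : (0:ℝ) < D := lt_of_lt_of_le one_pos hD
  set C : ℕ := Nat.choose (2*m-2) (m-1) with hC
  set N : ℕ := Nat.choose (2*m) m with hN
  set 𝒮 : Finset (Finset (Fin (2*m))) := Finset.powersetCard m Finset.univ with h𝒮
  set P : Fin (2*m) → ℝ := fun v => ∏ w ∈ Finset.univ.erase v, M v w with hP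
  have hP1 : ∀ v, 1 ≤ P v := by
    intro v
    show (1:ℝ) ≤ ∏ w ∈ Finset.univ.erase v, M v w
    have := Finset.prod_le_prod (s := Finset.univ.erase v) (f := fun _ => (1:ℝ))
      (g := fun w => M v w) (fun _ _ => zero_le_one)
      (fun w hw => hone v w (Finset.ne_of_mem_erase hw).symm)
    simpa using this
  -- Step 1: product over all balanced cuts
  have hScard : 𝒮.card = N := by
    rw [h𝒮, Finset.card_powersetCard, Finset.card_univ, Fintype.card_fin]
  have step1 : D ^ (m * N) ≤ ∏ S ∈ 𝒮, ∏ v ∈ S, ∏ w ∈ Sᶜ, M v w := by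
    rw [pow_mul]
    calc (D ^ m) ^ N = ∏ _S ∈ 𝒮, D ^ m := by rw [Finset.prod_const, hScard]
      _ ≤ ∏ S ∈ 𝒮, ∏ v ∈ S, ∏ w ∈ Sᶜ, M v w := by
          apply Finset.prod_le_prod
          · intro S _; positivity
          · intro S hS
            exact hcut S (Finset.mem_powersetCard_univ.mp hS)
  -- Step 2: rewrite as product of vertex products
  have step2 : ∏ S ∈ 𝒮, ∏ v ∈ S, ∏ w ∈ Sᶜ, M v w = (∏ v, P v) ^ C := by
    have e1 : ∏ S ∈ 𝒮, ∏ v ∈ S, ∏ w ∈ Sᶜ, M v w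
        = ∏ v, ∏ w, ∏ S ∈ 𝒮, (if v ∈ S ∧ w ∉ S then M v w else 1) := by
      rw [Finset.prod_congr rfl fun S _ => my_cut_eq M S, Finset.prod_comm]
      exact Finset.prod_congr rfl fun v _ => Finset.prod_comm
    have e2 : ∀ v w : Fin (2*m), ∏ S ∈ 𝒮, (if v ∈ S ∧ w ∉ S then M v w else 1)
        = M v w ^ (𝒮.filter (fun S => v ∈ S ∧ w ∉ S)).card := by
      intro v w
      rw [← Finset.prod_filter, Finset.prod_const]
    have e3 : ∀ v w : Fin (2*m), v ≠ w →
        ∏ S ∈ 𝒮, (if v ∈ S ∧ w ∉ S then M v w else 1) = M v w ^ C := by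
      intro v w hvw
      rw [e2, h𝒮, my_count m v w hvw]
    have e4 : ∀ v : Fin (2*m),
        ∏ w, ∏ S ∈ 𝒮, (if v ∈ S ∧ w ∉ S then M v w else 1) = (P v) ^ C := by
      intro v
      rw [← Finset.mul_prod_erase Finset.univ _ (Finset.mem_univ v)]
      have hvv : ∏ S ∈ 𝒮, (if v ∈ S ∧ v ∉ S then M v v else 1) = 1 := by
        apply Finset.prod_eq_one
        intro S _
        simp
      rw [hvv, one_mul, hP, ← Finset.prod_pow]
      exact Finset.prod_congr rfl fun w hw =>
        e3 v w (Finset.ne_of_mem_erase hw).symm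
    rw [e1, Finset.prod_congr rfl fun v _ => e4 v, Finset.prod_pow]
  -- Step 3: D^(2(2m-1)) ≤ ∏ v, P v
  have hCpos : 0 < C := Nat.choose_pos (by omega)
  have hkey : m * N = 2*(2*m-1) * C := my_binom_id m hm
  have step3 : D ^ (2*(2*m-1)) ≤ ∏ v, P v := by
    have h : (D ^ (2*(2*m-1))) ^ C ≤ (∏ v, P v) ^ C := by
      rw [← pow_mul, ← hkey]
      exact step2 ▸ step1
    exact le_of_pow_le_pow_left₀ hCpos.ne' (Finset.prod_nonneg fun v _ =>
      le_trans zero_le_one (hP1 v)) h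
  -- Step 4: conclude by contradiction
  by_contra hcon
  push_neg at hcon
  have hlt : ∏ v, P v < (D ^ ((2:ℝ) - 1/(m:ℝ))) ^ (2*m) := by
    calc ∏ v, P v < ∏ _v : Fin (2*m), D ^ ((2:ℝ) - 1/(m:ℝ)) := by
          apply Finset.prod_lt_prod_of_nonempty
          · intro v _; exact lt_of_lt_of_le one_pos (hP1 v)
          · intro v _; exact hcon v
          · exact ⟨⟨0, by omega⟩, Finset.mem_univ _⟩
      _ = (D ^ ((2:ℝ) - 1/(m:ℝ))) ^ (2*m) := by
          rw [Finset.prod_const, Finset.card_univ, Fintype.card_fin]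
  have heq : (D ^ ((2:ℝ) - 1/(m:ℝ))) ^ (2*m) = D ^ (2*(2*m-1)) := by
    rw [← Real.rpow_natCast (D ^ ((2:ℝ) - 1/(m:ℝ))) (2*m), ← Real.rpow_mul hD0.le,
      ← Real.rpow_natCast D (2*(2*m-1))]
    congr 1
    have hm' : (m:ℝ) ≠ 0 := Nat.cast_ne_zero.mpr hm.ne'
    have : ((2*(2*m-1) : ℕ) : ℝ) = 4*(m:ℝ) - 2 := by
      push_cast [Nat.cast_sub (by omega : 1 ≤ 2*m)]
      ring
    rw [this]
    push_cast
    field_simp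
    ring
  rw [heq] at hlt
  exact absurd step3 (not_le.mpr hlt)
end

section
/- The two-qutrit antisymmetric Werner state is not a mixture of maximally entangled states (core of Proposition 3.3 of the paper). Let S be the swap operator on ℂ³⊗ℂ³ (S(|a⟩⊗|b⟩) = |b⟩⊗|a⟩) and define the density matrix ρ := (1/3)·(1/2)( 1₉ − S ), the normalized projector onto the antisymmetric subspace of ℂ³⊗ℂ³. Then both reduced density matrices of ρ are maximally mixed, tr₂ ρ = tr₁ ρ = 1₃/3, and yet there exist no finite probability distribution {p_m} and unitaries {U_m} on ℂ³ such that ρ = Σ_m p_m (1₃ ⊗ U_m) |Φ₃⁺⟩⟨Φ₃⁺| (1₃ ⊗ U_m)†, where |Φ₃⁺⟩ := (1/√3) Σ_{l=0}^{2} |l⟩⊗|l⟩. Consequently, by the equivalence between one-way exact state merging at zero entanglement cost and a mixed-unitary representation, exact state merging of the three-qutrit purification of ρ in the non-catalytic setting cannot be achieved by one-way LOCC at zero entanglement cost, even though its reduced states satisfy the majorization-based converse bound with K = 1. -/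
open Matrix Kronecker

noncomputable section

/-- The swap operator on `ℂ³ ⊗ ℂ³`. -/
def swapOp : Matrix (Fin 3 × Fin 3) (Fin 3 × Fin 3) ℂ :=
  Matrix.of fun p q => if p.1 = q.2 ∧ p.2 = q.1 then 1 else 0

/-- The two-qutrit antisymmetric Werner state `(1/3)·(1/2)(1 − S)`. -/
def wernerAnti : Matrix (Fin 3 × Fin 3) (Fin 3 × Fin 3) ℂ :=
  ((6 : ℂ))⁻¹ • ((1 : Matrix (Fin 3 × Fin 3) (Fin 3 × Fin 3) ℂ) - swapOp)

/-- The two-qutrit maximally entangled state `|Φ₃⁺⟩ = (1/√3) Σ_l |l⟩⊗|l⟩`. -/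
def phi3 : Fin 3 × Fin 3 → ℂ :=
  fun p => if p.1 = p.2 then (((Real.sqrt 3)⁻¹ : ℝ) : ℂ) else 0

/-- Entrywise formula for a maximally entangled state twirled by `1 ⊗ U`. -/
lemma mes_entry (U : Matrix (Fin 3) (Fin 3) ℂ) (a b c d : Fin 3) :
    (((1 : Matrix (Fin 3) (Fin 3) ℂ) ⊗ₖ U) * outer phi3 *
      ((1 : Matrix (Fin 3) (Fin 3) ℂ) ⊗ₖ U)ᴴ) (a, b) (c, d)
      = (3 : ℂ)⁻¹ * (U b a * starRingEnd ℂ (U d c)) := by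
  have h3 : ((Real.sqrt 3 : ℝ) : ℂ)⁻¹ * ((Real.sqrt 3 : ℝ) : ℂ)⁻¹ = (3 : ℂ)⁻¹ := by
    rw [← mul_inv, ← Complex.ofReal_mul, Real.mul_self_sqrt (by norm_num)]
    norm_num
  simp only [Matrix.mul_apply, Fintype.sum_prod_type, Matrix.conjTranspose_apply,
    Matrix.kroneckerMap_apply, Matrix.one_apply, outer, phi3, Matrix.of_apply]
  simp [Finset.mul_sum, Finset.sum_mul, apply_ite, mul_comm, mul_assoc, mul_left_comm]
  left
  rw [← mul_assoc, h3]

/-- If a sum of nonnegatively weighted squared moduli vanishes, each term with positive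
weight vanishes. -/
lemma zero_of_sum_sq {ι : Type} [Fintype ι] (p : ι → ℝ) (z : ι → ℂ)
    (hp : ∀ m, 0 ≤ p m)
    (h : (0 : ℂ) = ∑ m, (p m : ℂ) * ((3 : ℂ)⁻¹ * (z m * starRingEnd ℂ (z m))))
    (m : ι) (hm : 0 < p m) : z m = 0 := by
  have h' : (0 : ℝ) = ∑ m, p m * (3⁻¹ * Complex.normSq (z m)) := by
    have := congrArg Complex.re h
    simpa [Complex.mul_conj, Complex.ofReal_sum] using this
  have hterm : ∀ k ∈ Finset.univ, (0 : ℝ) ≤ p k * (3⁻¹ * Complex.normSq (z k)) := by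
    intro k _
    exact mul_nonneg (hp k) (mul_nonneg (by norm_num) (Complex.normSq_nonneg _))
  have hz : p m * (3⁻¹ * Complex.normSq (z m)) = 0 :=
    (Finset.sum_eq_zero_iff_of_nonneg hterm).1 h'.symm m (Finset.mem_univ m)
  have : Complex.normSq (z m) = 0 := by
    rcases mul_eq_zero.1 hz with h1 | h1
    · exact absurd h1 (ne_of_gt hm)
    · rcases mul_eq_zero.1 h1 with h2 | h2
      · norm_num at h2
      · exact h2
  exact Complex.normSq_eq_zero.1 this

/-- **The two-qutrit antisymmetric Werner state is not a mixture of maximally entangled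
states** (core of Proposition 3.3).  Both its reduced density matrices are maximally mixed,
yet it admits no representation `Σ_m p_m (1⊗U_m)|Φ₃⁺⟩⟨Φ₃⁺|(1⊗U_m)†` with a probability
distribution `p` and unitaries `U_m`. -/
theorem werner_antisymmetric_not_mixed_maximally_entangled :
    (Matrix.of fun a b : Fin 3 => ∑ j, wernerAnti (a, j) (b, j))
      = ((3 : ℂ))⁻¹ • (1 : Matrix (Fin 3) (Fin 3) ℂ) ∧
    (Matrix.of fun a b : Fin 3 => ∑ i, wernerAnti (i, a) (i, b))
      = ((3 : ℂ))⁻¹ • (1 : Matrix (Fin 3) (Fin 3) ℂ) ∧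
    ¬ ∃ (ι : Type) (_ : Fintype ι) (p : ι → ℝ)
        (U : ι → Matrix (Fin 3) (Fin 3) ℂ),
        (∀ m, 0 ≤ p m) ∧ (∑ m, p m = 1) ∧
        (∀ m, (U m)ᴴ * U m = 1) ∧ (∀ m, U m * (U m)ᴴ = 1) ∧
        wernerAnti = ∑ m, (p m : ℂ) •
          (((1 : Matrix (Fin 3) (Fin 3) ℂ) ⊗ₖ U m) * outer phi3 *
            ((1 : Matrix (Fin 3) (Fin 3) ℂ) ⊗ₖ U m)ᴴ) := by
  refine ⟨?_, ?_, ?_⟩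
  · ext a b
    fin_cases a <;> fin_cases b <;>
      simp [wernerAnti, swapOp, Matrix.one_apply, Fin.sum_univ_three, Prod.ext_iff] <;>
      norm_num
  · ext a b
    fin_cases a <;> fin_cases b <;>
      simp [wernerAnti, swapOp, Matrix.one_apply, Fin.sum_univ_three, Prod.ext_iff] <;>
      norm_num
  · rintro ⟨ι, _, p, U, hp, hp1, hUl, _, hρ⟩
    -- entrywise form of the hypothesis
    have hW : ∀ a b c d : Fin 3, wernerAnti (a, b) (c, d)
        = ∑ m, (p m : ℂ) * ((3 : ℂ)⁻¹ * (U m b a * starRingEnd ℂ (U m d c))) := by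
      intro a b c d
      rw [hρ]
      rw [Matrix.sum_apply]
      refine Finset.sum_congr rfl fun m _ => ?_
      rw [Matrix.smul_apply, mes_entry]
      simp [mul_assoc]
    -- there is a strictly positive weight
    obtain ⟨m, hm⟩ : ∃ m, 0 < p m := by
      by_contra h
      push_neg at h
      have : ∑ m, p m = 0 := Finset.sum_eq_zero fun m _ => le_antisymm (h m) (hp m)
      rw [this] at hp1
      norm_num at hp1
    -- diagonal entries force vanishing diagonal of each U_m
    have hdiag : ∀ a : Fin 3, U m a a = 0 := by
      intro a
      refine zero_of_sum_sq p (fun k => U k a a) hp ?_ m hm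
      have h0 : wernerAnti (a, a) (a, a) = 0 := by
        simp [wernerAnti, swapOp, Matrix.one_apply]
      rw [← hW a a a a, h0]
    -- off-diagonal entries force antisymmetry of each U_m
    have hanti : ∀ a b : Fin 3, a ≠ b → U m b a + U m a b = 0 := by
      intro a b hab
      refine zero_of_sum_sq p (fun k => U k b a + U k a b) hp ?_ m hm
      have key : wernerAnti (a, b) (a, b) + wernerAnti (a, b) (b, a)
          + wernerAnti (b, a) (a, b) + wernerAnti (b, a) (b, a)
          = ∑ k, (p k : ℂ) * ((3 : ℂ)⁻¹ *
              ((U k b a + U k a b) * starRingEnd ℂ (U k b a + U k a b))) := by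
        rw [hW a b a b, hW a b b a, hW b a a b, hW b a b a,
          ← Finset.sum_add_distrib, ← Finset.sum_add_distrib, ← Finset.sum_add_distrib]
        refine Finset.sum_congr rfl fun k _ => ?_
        simp only [map_add]
        ring
      have h0 : wernerAnti (a, b) (a, b) + wernerAnti (a, b) (b, a)
          + wernerAnti (b, a) (a, b) + wernerAnti (b, a) (b, a) = 0 := by
        simp [wernerAnti, swapOp, Matrix.one_apply, Prod.ext_iff, hab, hab.symm]
      rw [← key, h0]
    -- hence U m is antisymmetric with zero diagonal, so its determinant vanishes
    have hdet : (U m).det = 0 := by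
      have e01 : U m 1 0 = -U m 0 1 := by
        have := hanti 1 0 (by decide); linear_combination this
      have e02 : U m 2 0 = -U m 0 2 := by
        have := hanti 2 0 (by decide); linear_combination this
      have e12 : U m 2 1 = -U m 1 2 := by
        have := hanti 2 1 (by decide); linear_combination this
      rw [Matrix.det_fin_three, hdiag 0, hdiag 1, hdiag 2, e01, e02, e12]
      ring
    -- contradiction with unitarity
    have := congrArg Matrix.det (hUl m)
    rw [Matrix.det_mul, Matrix.det_one, hdet, mul_zero] at this
    exact zero_ne_one this

end
end
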